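/- Let (X_n) be a reversible nearest-neighbour random walk in periodic environment on Z^d with p_x(e) > 0 for all x ∈ Z^d and all unit vectors e (so the induced chain ξ on T is irreducible, with unique stationary distribution π, and ν := Σ_{x∈T} π(x) Σ_{y∈Z^d} p_x(y) y). If the average negative gradient g of the potential is not the zero vector, then ⟨g, ν⟩ > 0. -/

import Mathlib

open MeasureTheory Filter Topology ProbabilityTheory

noncomputable section

/-- The torus `T = ℤ^d / (M₁ℤ × ⋯ × M_dℤ)`. -/
abbrev Torus (d : ℕ) (Md : Fin d → ℕ) : Type := ∀ i : Fin d, ZMod (Md i)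

/-- Projection of `ℤ^d` onto the torus, `x ↦ x mod M`. -/
def projT {d : ℕ} (Md : Fin d → ℕ) (x : Fin d → ℤ) : Torus d Md :=
  fun i => (x i : ZMod (Md i))

/-- A canonical representative in `ℤ^d` of a point of the torus. -/
def repT {d : ℕ} (Md : Fin d → ℕ) [∀ i, NeZero (Md i)] (t : Torus d Md) : Fin d → ℤ :=
  fun i => ((t i).val : ℤ)

/-- `p` is a periodic environment on `ℤ^d`: each `p x` is a probability distribution
on `ℤ^d` (the jump distribution at `x`), and `x ↦ p x` is `M`-periodic. -/
def IsPeriodicEnv {d : ℕ} (Md : Fin d → ℕ) (p : (Fin d → ℤ) → (Fin d → ℤ) → ℝ) : Prop :=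
  (∀ x y, 0 ≤ p x y) ∧ (∀ x, HasSum (p x) 1) ∧
    ∀ (x y : Fin d → ℤ) (i : Fin d), p (x + Pi.single i (Md i : ℤ)) y = p x y

/-- The transition matrix of the induced Markov chain on the torus:
`P a b = ∑_{z : ℤ^d, a + z ∼ b} p_a(z)` (the jump `z` leads from the class `a`
to the class `b` iff `a + (z mod M) = b`). -/
def indMatrix {d : ℕ} (Md : Fin d → ℕ) [∀ i, NeZero (Md i)]
    (p : (Fin d → ℤ) → (Fin d → ℤ) → ℝ) : Matrix (Torus d Md) (Torus d Md) ℝ :=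
  Matrix.of fun a b => ∑' z : Fin d → ℤ, if a + projT Md z = b then p (repT Md a) z else 0

/-- Irreducibility of a finite-state transition matrix: every state can be reached
from every state with positive probability in finitely many (positively many) steps. -/
def MatIrreducible {T : Type*} [Fintype T] [DecidableEq T] (P : Matrix T T ℝ) : Prop :=
  ∀ a b : T, ∃ n : ℕ, 0 < n ∧ 0 < (P ^ n) a b

/-- Aperiodicity of a finite-state transition matrix: for every state, the gcd of
the possible return times is `1`. -/
def MatAperiodic {T : Type*} [Fintype T] [DecidableEq T] (P : Matrix T T ℝ) : Prop :=
  ∀ a : T, ∀ m : ℕ, (∀ n : ℕ, 0 < n → 0 < (P ^ n) a a → m ∣ n) → m = 1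

/-- `π` is a stationary probability distribution for the transition matrix `P`. -/
def IsStationaryDist {T : Type*} [Fintype T] (P : Matrix T T ℝ) (π : T → ℝ) : Prop :=
  (∀ a, 0 ≤ π a) ∧ (∑ a, π a = 1) ∧ ∀ b, ∑ a, π a * P a b = π b

/-- The drift vector `ν = ∑_{x ∈ T} π(x) ∑_{y ∈ ℤ^d} p_x(y) y`. -/
def driftVec {d : ℕ} (Md : Fin d → ℕ) [∀ i, NeZero (Md i)]
    (p : (Fin d → ℤ) → (Fin d → ℤ) → ℝ) (π : Torus d Md → ℝ) : Fin d → ℝ :=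
  fun i => ∑ a : Torus d Md, π a * ∑' y : Fin d → ℤ, p (repT Md a) y * (y i : ℝ)

/-- `μ` is the law of the random walk in the environment `p` started at `x₀`,
as a probability measure on trajectory space: the probability of every cylinder set
is the corresponding product of one-step transition probabilities. -/
def IsRWPELaw {d : ℕ} (p : (Fin d → ℤ) → (Fin d → ℤ) → ℝ) (x₀ : Fin d → ℤ)
    (μ : Measure (ℕ → (Fin d → ℤ))) : Prop :=
  IsProbabilityMeasure μ ∧
    ∀ (n : ℕ) (x : ℕ → (Fin d → ℤ)),
      μ {ω | ∀ i ≤ n, ω i = x i} =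
        ENNReal.ofReal ((if x 0 = x₀ then (1 : ℝ) else 0) *
          ∏ i ∈ Finset.range n, p (x i) (x (i + 1) - x i))

/-- `e` is one of the `2d` unit vectors of `ℤ^d`. -/
def IsUnitVec {d : ℕ} (e : Fin d → ℤ) : Prop :=
  ∃ i : Fin d, e = Pi.single i 1 ∨ e = -Pi.single i 1

/-- The environment is nearest neighbour: only jumps to nearest neighbours have
positive probability. -/
def IsNearestNeighbour {d : ℕ} (p : (Fin d → ℤ) → (Fin d → ℤ) → ℝ) : Prop :=
  ∀ x y, p x y ≠ 0 → IsUnitVec y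

/-- The average negative gradient `g` of the potential,
`g_i = (1/M_i) ∑_{j=0}^{M_i - 1} log (p_{j eᵢ}(eᵢ) / p_{(j+1) eᵢ}(-eᵢ))`. -/
def avgNegGrad {d : ℕ} (Md : Fin d → ℕ) (p : (Fin d → ℤ) → (Fin d → ℤ) → ℝ) :
    Fin d → ℝ :=
  fun i => (Md i : ℝ)⁻¹ * ∑ j ∈ Finset.range (Md i),
    Real.log (p (Pi.single i (j : ℤ)) (Pi.single i 1) /
      p (Pi.single i ((j : ℤ) + 1)) (-Pi.single i 1))

/-- The conditional expected jump `μ_{xy}` of the walk, given that the induced chain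
jumps from `x` to `y`. -/
def condJump {d : ℕ} (Md : Fin d → ℕ) [∀ i, NeZero (Md i)]
    (p : (Fin d → ℤ) → (Fin d → ℤ) → ℝ) (a b : Torus d Md) : Fin d → ℝ :=
  if indMatrix Md p a b = 0 then 0
  else fun i =>
    (∑' z : Fin d → ℤ, if a + projT Md z = b then p (repT Md a) z * (z i : ℝ) else 0) /
      indMatrix Md p a b

/-!
The corrected potential `φ(x) = u(x) + ⟨g, x⟩` is `M`-periodic, so for a unit step `e` from `x`,
reversibility gives `⟨g, e⟩ = log (π(x) p_x(e)) - log (π(x+e) p_{x+e}(-e)) + ψ(x+e) - ψ(x)` with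
`ψ = φ + log π` a function on the torus. Averaging against the stationary edge flow
`F(x, e) = π(x) p_x(e)` kills the gradient of `ψ`, so `⟨g, ν⟩` is the entropy production
`∑ F log (F / F ∘ reverse)`, which by `log t ≤ t - 1` is positive unless `F` is symmetric under
edge reversal. In that case `⟨g, e⟩` is itself a gradient on the torus, and summing it around
the loop `k ↦ k eᵢ` of length `Mᵢ` gives `Mᵢ gᵢ = 0`.
-/

open Finset Function

section Periodicity

variable {d : ℕ} {α : Type*}

lemma periodic_of_forall_dvd {h : (Fin d → ℤ) → α} {c : Fin d → ℤ}
    (hc : ∀ i, Periodic h (Pi.single i (c i))) {v : Fin d → ℤ} (hv : ∀ i, c i ∣ v i) :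
    Periodic h v := by
  rw [← Finset.univ_sum_single v]
  refine Finset.sum_induction _ (Periodic h) (fun _ _ => Periodic.add_period)
    (fun x => by rw [add_zero]) fun i _ => ?_
  obtain ⟨k, hk⟩ := hv i
  rw [hk, mul_comm, ← smul_eq_mul, Pi.single_zsmul]
  exact (hc i).zsmul k

lemma apply_eq_apply_zero_of_periodic_single_one {h : (Fin d → ℤ) → α}
    (hh : ∀ i, Periodic h (Pi.single i 1)) (x : Fin d → ℤ) : h x = h 0 := by
  simpa using periodic_of_forall_dvd (c := 1) hh (fun i => one_dvd (x i)) 0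

variable {Md : Fin d → ℕ}

lemma projT_add (x y : Fin d → ℤ) : projT Md (x + y) = projT Md x + projT Md y := by
  funext i; simp [projT]

lemma projT_neg (x : Fin d → ℤ) : projT Md (-x) = -projT Md x := by
  funext i; simp [projT]

lemma projT_zero : projT Md 0 = 0 := by
  funext i; simp [projT]

lemma projT_single_self (i : Fin d) : projT Md (Pi.single i (Md i : ℤ)) = 0 := by
  funext j
  by_cases hj : j = i
  · subst hj; simp [projT]
  · simp [projT, hj]

lemma projT_repT [∀ i, NeZero (Md i)] (a : Torus d Md) : projT Md (repT Md a) = a := by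
  funext i; simp [projT, repT]

lemma projT_repT_add [∀ i, NeZero (Md i)] (a : Torus d Md) (e : Fin d → ℤ) :
    projT Md (repT Md a + e) = a + projT Md e := by
  rw [projT_add, projT_repT]

lemma eq_of_projT_eq_of_periodic {h : (Fin d → ℤ) → α}
    (hh : ∀ i, Periodic h (Pi.single i (Md i : ℤ)))
    {x y : Fin d → ℤ} (hxy : projT Md x = projT Md y) : h x = h y := by
  have hper : Periodic h (y - x) := periodic_of_forall_dvd hh fun i =>
    (ZMod.intCast_eq_intCast_iff_dvd_sub _ _ _).mp (congrFun hxy i)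
  rw [← hper x, add_sub_cancel]

end Periodicity

section UnitVectors

variable {d : ℕ}

lemma isUnitVec_single (i : Fin d) : IsUnitVec (Pi.single i (1 : ℤ)) := ⟨i, Or.inl rfl⟩

lemma IsUnitVec.neg {e : Fin d → ℤ} (he : IsUnitVec e) : IsUnitVec (-e) := by
  obtain ⟨i, rfl | rfl⟩ := he
  exacts [⟨i, Or.inr rfl⟩, ⟨i, Or.inl (neg_neg _)⟩]

def unitVecs (d : ℕ) : Finset (Fin d → ℤ) :=
  univ.image (fun i => Pi.single i 1) ∪ univ.image (fun i => -Pi.single i 1)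

lemma mem_unitVecs {e : Fin d → ℤ} : e ∈ unitVecs d ↔ IsUnitVec e := by
  simp only [unitVecs, mem_union, mem_image, mem_univ, true_and, IsUnitVec, exists_or, eq_comm]

lemma tsum_eq_sum_unitVecs {f : (Fin d → ℤ) → ℝ} (hf : ∀ y, ¬IsUnitVec y → f y = 0) :
    ∑' y, f y = ∑ e ∈ unitVecs d, f e :=
  tsum_eq_sum fun y hy => hf y (mem_unitVecs.not.mp hy)

end UnitVectors

section Environment

variable {d : ℕ} {Md : Fin d → ℕ} {p : (Fin d → ℤ) → (Fin d → ℤ) → ℝ}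

lemma IsNearestNeighbour.eq_zero (hnn : IsNearestNeighbour p) {y : Fin d → ℤ}
    (hy : ¬IsUnitVec y) (x : Fin d → ℤ) : p x y = 0 :=
  by_contra fun h => hy (hnn x y h)

lemma IsNearestNeighbour.sum_unitVecs_eq_one (henv : IsPeriodicEnv Md p)
    (hnn : IsNearestNeighbour p) (x : Fin d → ℤ) : ∑ e ∈ unitVecs d, p x e = 1 := by
  rw [← (henv.2.1 x).tsum_eq]
  exact (tsum_eq_sum_unitVecs fun _ hy => hnn.eq_zero hy x).symm

lemma IsNearestNeighbour.tsum_mul_eq_sum (hnn : IsNearestNeighbour p) (x : Fin d → ℤ)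
    (f : (Fin d → ℤ) → ℝ) : ∑' y, p x y * f y = ∑ e ∈ unitVecs d, p x e * f e :=
  tsum_eq_sum_unitVecs fun _ hy => by rw [hnn.eq_zero hy, zero_mul]

lemma IsPeriodicEnv.eq_of_projT_eq (henv : IsPeriodicEnv Md p) {x x' : Fin d → ℤ}
    (hx : projT Md x = projT Md x') (y : Fin d → ℤ) : p x y = p x' y :=
  eq_of_projT_eq_of_periodic (h := fun x => p x y) (fun i z => henv.2.2 z y i) hx

variable [∀ i, NeZero (Md i)]

lemma IsNearestNeighbour.indMatrix_apply (hnn : IsNearestNeighbour p) (a b : Torus d Md) :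
    indMatrix Md p a b =
      ∑ e ∈ unitVecs d, if a + projT Md e = b then p (repT Md a) e else 0 :=
  tsum_eq_sum_unitVecs fun y hy => by
    rw [hnn.eq_zero hy, ite_self]

lemma IsNearestNeighbour.sum_indMatrix_mul (hnn : IsNearestNeighbour p) (a : Torus d Md)
    (f : Torus d Md → ℝ) :
    ∑ b, indMatrix Md p a b * f b = ∑ e ∈ unitVecs d, p (repT Md a) e * f (a + projT Md e) := by
  simp_rw [hnn.indMatrix_apply, Finset.sum_mul, ite_mul, zero_mul]
  rw [Finset.sum_comm]
  simp

lemma indMatrix_nonneg (henv : IsPeriodicEnv Md p) (hnn : IsNearestNeighbour p)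
    (a b : Torus d Md) : 0 ≤ indMatrix Md p a b := by
  rw [hnn.indMatrix_apply]
  exact Finset.sum_nonneg fun _ _ => ite_nonneg (henv.1 _ _) le_rfl

lemma indMatrix_pos_of_isUnitVec (henv : IsPeriodicEnv Md p) (hnn : IsNearestNeighbour p)
    (hpos : ∀ x e, IsUnitVec e → 0 < p x e) (a : Torus d Md) {e : Fin d → ℤ}
    (he : IsUnitVec e) : 0 < indMatrix Md p a (a + projT Md e) := by
  rw [hnn.indMatrix_apply]
  refine Finset.sum_pos' (fun _ _ => ite_nonneg (henv.1 _ _) le_rfl)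
    ⟨e, mem_unitVecs.mpr he, by simp [hpos _ _ he]⟩

end Environment

section Stationary

variable {T : Type*} [Fintype T] {P : Matrix T T ℝ} {π : T → ℝ}

lemma IsStationaryDist.sum_mul_sum_mul (hπ : IsStationaryDist P π) (f : T → ℝ) :
    ∑ a, π a * ∑ b, P a b * f b = ∑ b, π b * f b := by
  simpa only [dotProduct, Matrix.mulVec, Matrix.vecMul, hπ.2.2] using
    Matrix.dotProduct_mulVec π P f

lemma IsStationaryDist.eq_zero_of_pos (hπ : IsStationaryDist P π) (hP : ∀ a b, 0 ≤ P a b)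
    {a b : T} (hab : 0 < P a b) (hb : π b = 0) : π a = 0 := by
  have : π a * P a b ≤ π b := hπ.2.2 b ▸
    Finset.single_le_sum (fun c _ => mul_nonneg (hπ.1 c) (hP c b)) (Finset.mem_univ a)
  nlinarith [hπ.1 a]

end Stationary

section StationaryRWPE

variable {d : ℕ} {Md : Fin d → ℕ} [∀ i, NeZero (Md i)] {p : (Fin d → ℤ) → (Fin d → ℤ) → ℝ}
  {π : Torus d Md → ℝ}

lemma IsStationaryDist.sum_mul_sum_unitVecs_sub (henv : IsPeriodicEnv Md p)
    (hnn : IsNearestNeighbour p) (hπ : IsStationaryDist (indMatrix Md p) π)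
    (f : Torus d Md → ℝ) :
    ∑ a, π a * ∑ e ∈ unitVecs d, p (repT Md a) e * (f (a + projT Md e) - f a) = 0 := by
  have hrow (a : Torus d Md) :
      ∑ e ∈ unitVecs d, p (repT Md a) e * (f (a + projT Md e) - f a) =
        ∑ b, indMatrix Md p a b * f b - f a := by
    simp only [mul_sub, Finset.sum_sub_distrib, ← Finset.sum_mul,
      hnn.sum_unitVecs_eq_one henv, one_mul, hnn.sum_indMatrix_mul]
  simp only [hrow]
  simp only [mul_sub, Finset.sum_sub_distrib, hπ.sum_mul_sum_mul, sub_self]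

lemma IsStationaryDist.pos (henv : IsPeriodicEnv Md p) (hnn : IsNearestNeighbour p)
    (hpos : ∀ x e, IsUnitVec e → 0 < p x e) (hπ : IsStationaryDist (indMatrix Md p) π)
    (a : Torus d Md) : 0 < π a := by
  have hstep {x e : Fin d → ℤ} (he : IsUnitVec e) (h : π (projT Md (x + e)) = 0) :
      π (projT Md x) = 0 := by
    refine hπ.eq_zero_of_pos (indMatrix_nonneg henv hnn) ?_ h
    rw [projT_add]
    exact indMatrix_pos_of_isUnitVec henv hnn hpos _ he
  -- the zero set of `π` is invariant under unit steps, hence empty or everything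
  have hper (i : Fin d) : Periodic (fun x => π (projT Md x) = 0) (Pi.single i 1) := fun x =>
    propext ⟨hstep (isUnitVec_single i),
      fun h => hstep (isUnitVec_single i).neg (by rwa [add_neg_cancel_right])⟩
  have hzero (b c : Torus d Md) (hb : π b = 0) : π c = 0 := by
    have hb' := apply_eq_apply_zero_of_periodic_single_one hper (repT Md b)
    have hc' := apply_eq_apply_zero_of_periodic_single_one hper (repT Md c)
    simp only [projT_repT] at hb' hc'
    rw [hc', ← hb']
    exact hb
  refine (hπ.1 a).lt_of_ne fun ha => ?_
  have := hπ.2.1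
  simp [fun c => hzero a c ha.symm] at this

end StationaryRWPE

section Potential

variable {d : ℕ} {Md : Fin d → ℕ} {p : (Fin d → ℤ) → (Fin d → ℤ) → ℝ} {u : (Fin d → ℤ) → ℝ}

def IsPotential (p : (Fin d → ℤ) → (Fin d → ℤ) → ℝ) (u : (Fin d → ℤ) → ℝ) : Prop :=
  ∀ x e, IsUnitVec e → u x - u (x + e) = Real.log (p x e / p (x + e) (-e))

lemma IsPotential.add_sub_eq (hu : IsPotential p u) {v : Fin d → ℤ}
    (hv : ∀ x y, p (x + v) y = p x y) (x : Fin d → ℤ) : u (x + v) - u x = u v - u 0 := by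
  have hper (j : Fin d) : Periodic (fun y => u (y + v) - u y) (Pi.single j 1) := fun y => by
    have hy := hu y _ (isUnitVec_single j)
    have hyv := hu (y + v) _ (isUnitVec_single j)
    rw [hv, add_right_comm y v, hv] at hyv
    dsimp only
    linarith
  simpa using apply_eq_apply_zero_of_periodic_single_one hper x

lemma IsPotential.sub_single_eq (hu : IsPotential p u) (i : Fin d) [NeZero (Md i)] :
    u 0 - u (Pi.single i (Md i : ℤ)) = Md i * avgNegGrad Md p i := by
  have hstep (j : ℕ) : u (Pi.single i (j : ℤ)) - u (Pi.single i ((j + 1 : ℕ) : ℤ)) =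
      Real.log (p (Pi.single i (j : ℤ)) (Pi.single i 1) /
        p (Pi.single i ((j : ℤ) + 1)) (-Pi.single i 1)) := by
    rw [Nat.cast_succ, Pi.single_add, hu _ _ (isUnitVec_single i)]
  rw [avgNegGrad, ← mul_assoc, mul_inv_cancel₀ (Nat.cast_ne_zero.mpr (NeZero.ne _)), one_mul,
    ← Finset.sum_congr rfl fun j _ => hstep j, Finset.sum_range_sub', Nat.cast_zero,
    Pi.single_zero]

def correctedPotential (Md : Fin d → ℕ) (p : (Fin d → ℤ) → (Fin d → ℤ) → ℝ)
    (u : (Fin d → ℤ) → ℝ) (x : Fin d → ℤ) : ℝ :=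
  u x + ∑ i, avgNegGrad Md p i * (x i : ℝ)

lemma IsPotential.periodic_correctedPotential (henv : IsPeriodicEnv Md p)
    (hu : IsPotential p u) [∀ i, NeZero (Md i)] (i : Fin d) :
    Periodic (correctedPotential Md p u) (Pi.single i (Md i : ℤ)) := fun x => by
  have hu_shift := hu.add_sub_eq (fun x y => henv.2.2 x y i) x
  have hu_period := hu.sub_single_eq (Md := Md) i
  have hlin : ∑ j, avgNegGrad Md p j * (((x + Pi.single i (Md i : ℤ) : Fin d → ℤ) j : ℤ) : ℝ) =
      ∑ j, avgNegGrad Md p j * (x j : ℝ) + avgNegGrad Md p i * Md i := by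
    simp [mul_add, Finset.sum_add_distrib, Pi.single_apply]
  rw [correctedPotential, correctedPotential, hlin]
  linarith

end Potential

lemma sub_lt_mul_log_sub_log {x y : ℝ} (hx : 0 < x) (hy : 0 < y) (hxy : x ≠ y) :
    x - y < x * (Real.log x - Real.log y) := by
  have hlog := mul_lt_mul_of_pos_left
    (Real.log_lt_sub_one_of_pos (div_pos hy hx) (div_ne_one_of_ne hxy.symm)) hx
  rw [Real.log_div hy.ne' hx.ne', mul_sub, mul_sub, mul_div_cancel₀ _ hx.ne'] at hlog
  linarith

lemma sum_sub_lt_sum_mul_log_sub_log {ι : Type*} {s : Finset ι} {F G : ι → ℝ}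
    (hF : ∀ t ∈ s, 0 < F t) (hG : ∀ t ∈ s, 0 < G t) (hne : ∃ t ∈ s, F t ≠ G t) :
    ∑ t ∈ s, (F t - G t) < ∑ t ∈ s, F t * (Real.log (F t) - Real.log (G t)) := by
  refine Finset.sum_lt_sum (fun t ht => ?_) ?_
  · rcases eq_or_ne (F t) (G t) with h | h
    · simp [h]
    · exact (sub_lt_mul_log_sub_log (hF t ht) (hG t ht) h).le
  · obtain ⟨t, ht, h⟩ := hne
    exact ⟨t, ht, sub_lt_mul_log_sub_log (hF t ht) (hG t ht) h⟩

section EdgeFlow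

variable {d : ℕ} {Md : Fin d → ℕ}

variable (Md) in
def edgeReverse (t : Torus d Md × (Fin d → ℤ)) : Torus d Md × (Fin d → ℤ) :=
  (t.1 + projT Md t.2, -t.2)

lemma edgeReverse_edgeReverse (t : Torus d Md × (Fin d → ℤ)) :
    edgeReverse Md (edgeReverse Md t) = t := by
  simp [edgeReverse, projT_neg]

variable [∀ i, NeZero (Md i)] {p : (Fin d → ℤ) → (Fin d → ℤ) → ℝ} {u : (Fin d → ℤ) → ℝ}
  {π : Torus d Md → ℝ}

variable (Md) in
def torusEdges : Finset (Torus d Md × (Fin d → ℤ)) := univ ×ˢ unitVecs d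

variable (Md p π) in
def edgeFlow (t : Torus d Md × (Fin d → ℤ)) : ℝ := π t.1 * p (repT Md t.1) t.2

variable (Md p u π) in
def flowPotential (a : Torus d Md) : ℝ := correctedPotential Md p u (repT Md a) + Real.log (π a)

lemma mem_torusEdges {t : Torus d Md × (Fin d → ℤ)} : t ∈ torusEdges Md ↔ IsUnitVec t.2 := by
  simp [torusEdges, mem_unitVecs]

lemma edgeReverse_mem {t : Torus d Md × (Fin d → ℤ)} (ht : t ∈ torusEdges Md) :
    edgeReverse Md t ∈ torusEdges Md :=
  mem_torusEdges.mpr (mem_torusEdges.mp ht).neg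

lemma sum_edgeFlow_edgeReverse :
    ∑ t ∈ torusEdges Md, edgeFlow Md p π (edgeReverse Md t) =
      ∑ t ∈ torusEdges Md, edgeFlow Md p π t :=
  Finset.sum_nbij' _ _ (fun _ => edgeReverse_mem) (fun _ => edgeReverse_mem)
    (fun t _ => edgeReverse_edgeReverse t) (fun t _ => edgeReverse_edgeReverse t) fun _ _ => rfl

lemma edgeFlow_pos (hpos : ∀ x e, IsUnitVec e → 0 < p x e) (hπ : ∀ a, 0 < π a)
    {t : Torus d Md × (Fin d → ℤ)} (ht : t ∈ torusEdges Md) : 0 < edgeFlow Md p π t :=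
  mul_pos (hπ _) (hpos _ _ (mem_torusEdges.mp ht))

lemma avgNegGrad_dot_eq (henv : IsPeriodicEnv Md p) (hpos : ∀ x e, IsUnitVec e → 0 < p x e)
    (hu : IsPotential p u) (hπ : ∀ a, 0 < π a) (a : Torus d Md) {e : Fin d → ℤ}
    (he : IsUnitVec e) :
    ∑ i, avgNegGrad Md p i * (e i : ℝ) =
      Real.log (edgeFlow Md p π (a, e)) - Real.log (edgeFlow Md p π (edgeReverse Md (a, e))) +
        (flowPotential Md p u π (a + projT Md e) - flowPotential Md p u π a) := by
  set x := repT Md a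
  have hx : projT Md (repT Md (a + projT Md e)) = projT Md (x + e) := by
    rw [projT_repT, projT_repT_add]
  have hp : p (repT Md (a + projT Md e)) (-e) = p (x + e) (-e) := henv.eq_of_projT_eq hx _
  have hφ : correctedPotential Md p u (repT Md (a + projT Md e)) =
      correctedPotential Md p u (x + e) :=
    eq_of_projT_eq_of_periodic (hu.periodic_correctedPotential henv) hx
  have hlin : correctedPotential Md p u (x + e) - correctedPotential Md p u x =
      u (x + e) - u x + ∑ i, avgNegGrad Md p i * (e i : ℝ) := by
    simp only [correctedPotential, Pi.add_apply, Int.cast_add, mul_add, Finset.sum_add_distrib]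
    ring
  have hlog := hu x e he
  rw [Real.log_div (hpos _ _ he).ne' (hpos _ _ he.neg).ne'] at hlog
  simp only [edgeFlow, edgeReverse, flowPotential, hp, hφ]
  rw [Real.log_mul (hπ _).ne' (hpos _ _ he).ne', Real.log_mul (hπ _).ne' (hpos _ _ he.neg).ne']
  linarith

lemma sum_avgNegGrad_mul_driftVec (hnn : IsNearestNeighbour p) :
    ∑ i, avgNegGrad Md p i * driftVec Md p π i =
      ∑ a, π a * ∑ e ∈ unitVecs d, p (repT Md a) e * ∑ i, avgNegGrad Md p i * (e i : ℝ) := by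
  simp only [driftVec, hnn.tsum_mul_eq_sum, Finset.mul_sum]
  rw [Finset.sum_comm]
  refine Finset.sum_congr rfl fun a _ => ?_
  rw [Finset.sum_comm]
  refine Finset.sum_congr rfl fun e _ => Finset.sum_congr rfl fun i _ => ?_
  ring

lemma sum_avgNegGrad_mul_driftVec_eq_entropy (henv : IsPeriodicEnv Md p)
    (hnn : IsNearestNeighbour p) (hpos : ∀ x e, IsUnitVec e → 0 < p x e)
    (hu : IsPotential p u) (hπ : IsStationaryDist (indMatrix Md p) π) :
    ∑ i, avgNegGrad Md p i * driftVec Md p π i =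
      ∑ t ∈ torusEdges Md, edgeFlow Md p π t *
        (Real.log (edgeFlow Md p π t) - Real.log (edgeFlow Md p π (edgeReverse Md t))) := by
  have hπpos := hπ.pos henv hnn hpos
  rw [sum_avgNegGrad_mul_driftVec hnn, torusEdges, Finset.sum_product, ← sub_eq_zero,
    ← hπ.sum_mul_sum_unitVecs_sub henv hnn (flowPotential Md p u π), ← Finset.sum_sub_distrib]
  refine Finset.sum_congr rfl fun a _ => ?_
  rw [Finset.mul_sum, Finset.mul_sum, ← Finset.sum_sub_distrib]
  refine Finset.sum_congr rfl fun e he => ?_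
  rw [avgNegGrad_dot_eq henv hpos hu hπpos a (mem_unitVecs.mp he), edgeFlow]
  ring

lemma avgNegGrad_eq_zero_of_detailed_balance (henv : IsPeriodicEnv Md p)
    (hpos : ∀ x e, IsUnitVec e → 0 < p x e) (hu : IsPotential p u) (hπ : ∀ a, 0 < π a)
    (hdb : ∀ t ∈ torusEdges Md, edgeFlow Md p π (edgeReverse Md t) = edgeFlow Md p π t) :
    avgNegGrad Md p = 0 := by
  funext i
  set ψ := flowPotential Md p u π
  have hstep (a : Torus d Md) : avgNegGrad Md p i = ψ (a + projT Md (Pi.single i 1)) - ψ a := by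
    have h := avgNegGrad_dot_eq henv hpos hu hπ a (isUnitVec_single i)
    rw [hdb _ (mem_torusEdges.mpr (isUnitVec_single i)), sub_self, zero_add] at h
    simpa [Pi.single_apply] using h
  have hloop := Finset.sum_range_sub (fun k : ℕ => ψ (projT Md (Pi.single i (k : ℤ)))) (Md i)
  simp only [Nat.cast_succ, Pi.single_add, projT_add, ← hstep, Finset.sum_const,
    Finset.card_range, nsmul_eq_mul, projT_single_self, Nat.cast_zero, Pi.single_zero,
    projT_zero, sub_self] at hloop
  exact (mul_eq_zero.mp hloop).resolve_left (Nat.cast_ne_zero.mpr (NeZero.ne _))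

end EdgeFlow

theorem rwpe_grad_dot_drift_pos_general (d : ℕ) (Md : Fin d → ℕ)
    [∀ i, NeZero (Md i)]
    (p : (Fin d → ℤ) → (Fin d → ℤ) → ℝ) (henv : IsPeriodicEnv Md p)
    (hnn : IsNearestNeighbour p) (hpos : ∀ x e, IsUnitVec e → 0 < p x e)
    (u : (Fin d → ℤ) → ℝ)
    (hu : ∀ x e, IsUnitVec e → u x - u (x + e) = Real.log (p x e / p (x + e) (-e)))
    (π : Torus d Md → ℝ) (hπ : IsStationaryDist (indMatrix Md p) π)
    (hg : avgNegGrad Md p ≠ 0) :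
    0 < ∑ i, avgNegGrad Md p i * driftVec Md p π i := by
  have hπpos := hπ.pos henv hnn hpos
  rw [sum_avgNegGrad_mul_driftVec_eq_entropy henv hnn hpos hu hπ]
  obtain ⟨t, ht, hne⟩ : ∃ t ∈ torusEdges Md,
      edgeFlow Md p π t ≠ edgeFlow Md p π (edgeReverse Md t) := by
    by_contra! hdb
    exact hg (avgNegGrad_eq_zero_of_detailed_balance henv hpos hu hπpos fun t ht => (hdb t ht).symm)
  calc (0 : ℝ)
      = ∑ t ∈ torusEdges Md, (edgeFlow Md p π t - edgeFlow Md p π (edgeReverse Md t)) := by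
        rw [Finset.sum_sub_distrib, sum_edgeFlow_edgeReverse, sub_self]
    _ < _ := sum_sub_lt_sum_mul_log_sub_log (fun _ ht => edgeFlow_pos hpos hπpos ht)
        (fun _ ht => edgeFlow_pos hpos hπpos (edgeReverse_mem ht)) ⟨t, ht, hne⟩

/-- **Main theorem.** For a reversible nearest-neighbour RWPE with all one-step
probabilities positive (so the induced chain is irreducible and has a unique
stationary distribution `π`), if the average negative gradient `g` of the potential is
nonzero, then `⟨g, ν⟩ > 0` for the drift `ν = ∑_{x∈T} π(x) ∑_y p_x(y) y`. -/
theorem rwpe_grad_dot_drift_pos (d : ℕ) (hd : 0 < d) (Md : Fin d → ℕ)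
    [∀ i, NeZero (Md i)]
    (p : (Fin d → ℤ) → (Fin d → ℤ) → ℝ) (henv : IsPeriodicEnv Md p)
    (hnn : IsNearestNeighbour p) (hpos : ∀ x e, IsUnitVec e → 0 < p x e)
    (u : (Fin d → ℤ) → ℝ) (hu0 : u 0 = 0)
    (hu : ∀ x e, IsUnitVec e → u x - u (x + e) = Real.log (p x e / p (x + e) (-e)))
    (π : Torus d Md → ℝ) (hπ : IsStationaryDist (indMatrix Md p) π)
    (hg : avgNegGrad Md p ≠ 0) :
    0 < ∑ i, avgNegGrad Md p i * driftVec Md p π i :=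
  rwpe_grad_dot_drift_pos_general d Md p henv hnn hpos u hu π hπ hg
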